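/- arXiv:2504.13869 — 2 statements merged into one kernel-verified Lean document; each statement's English description precedes it below -/
import Mathlib

section
/- Let T = (k^×)^n (k a field) with the twisted conjugation action of T on itself given by (t₁,...,tₙ) · (t'₁,...,t'ₙ) = (tₙ⁻¹t₁t'₁, t₁⁻¹t₂t'₂, ..., t_{n−1}⁻¹tₙt'ₙ). Then two elements of T are in the same orbit if and only if they have the same product of coordinates (determinant), and the stabilizer of every point is the diagonal copy of k^× (the scalars). -/
/-!
The twisted conjugation acts by `t' ↦ δ a * t'`, where `δ a i = (a (i - 1))⁻¹ * a i`
(`Fin.cyclicDiv`) is the cyclic difference of `a`. Everything follows from two facts about `δ`.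
Its kernel consists of the constant families, since `δ a = 1` says `a i = a (i - 1)` around the
cycle. Its image is the set of families with product `1`: the product of `δ a` telescopes to `1`,
and conversely a family `d` with product `1` is `δ` of its partial products, the wrap-around at
`i = 0` being exactly the condition `∏ d = 1`.
-/

namespace Fin

variable {G : Type*} {n : ℕ}

def cyclicDiv [Group G] [NeZero n] (a : Fin n → G) (i : Fin n) : G :=
  (a (i - 1))⁻¹ * a i

theorem cyclicDiv_eq_one_iff [Group G] {a : Fin (n + 1) → G} :
    cyclicDiv a = 1 ↔ ∃ c, ∀ i, a i = c := by
  constructor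
  · intro h
    have step (j : Fin n) : a j.succ = a j.castSucc := by
      rw [← inv_mul_eq_one.mp (congrFun h j.succ), ← coeSucc_eq_succ, add_sub_cancel_right]
    exact ⟨a 0, fun i => i.induction rfl fun j hj => (step j).trans hj⟩
  · rintro ⟨c, hc⟩
    funext i
    simp [cyclicDiv, hc]

theorem prod_cyclicDiv [CommGroup G] [NeZero n] (a : Fin n → G) : ∏ i, cyclicDiv a i = 1 := by
  have shift : ∏ i, a (i - 1) = ∏ i, a i :=
    Fintype.prod_equiv (Equiv.subRight 1) _ _ fun _ => rfl
  simp only [cyclicDiv, Finset.prod_mul_distrib, Finset.prod_inv_distrib, shift, inv_mul_cancel]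

theorem exists_cyclicDiv_eq [CommGroup G] {d : Fin (n + 1) → G} (hd : ∏ i, d i = 1) :
    ∃ a, cyclicDiv a = d := by
  refine ⟨fun i => partialProd d i.succ, funext fun i => i.cases ?_ fun j => ?_⟩
  · have hlast : partialProd d (last (n + 1)) = 1 := by
      rw [partialProd, val_last, List.take_of_length_le (by simp), List.prod_ofFn, hd]
    have hzero : (0 : Fin (n + 1)) - 1 = last n := sub_eq_of_eq_add (last_add_one n).symm
    simp only [cyclicDiv, hzero, succ_last, hlast, inv_one, one_mul]
    rw [partialProd_succ, castSucc_zero, partialProd_zero, one_mul]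
  · have hpred : j.succ - 1 = j.castSucc := sub_eq_of_eq_add coeSucc_eq_succ.symm
    simp only [cyclicDiv, hpred, succ_castSucc, partialProd_right_inv]

theorem exists_cyclicDiv_eq_iff [CommGroup G] {d : Fin (n + 1) → G} :
    (∃ a, cyclicDiv a = d) ↔ ∏ i, d i = 1 :=
  ⟨fun ⟨a, ha⟩ => ha ▸ prod_cyclicDiv a, exists_cyclicDiv_eq⟩

end Fin

/-- Let `T = (kˣ)^n` with the twisted conjugation action of `T` on
itself, `(t₁,…,tₙ) · (t'₁,…,t'ₙ) = (tₙ⁻¹ t₁ t'₁, t₁⁻¹ t₂ t'₂, …, t_{n-1}⁻¹ tₙ t'ₙ)`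
(indices cyclic, i.e. the `i`-th coordinate of `a · t'` is `(a_{i-1})⁻¹ a_i t'_i`).
Two elements of `T` are in the same orbit iff they have the same product of
coordinates (determinant), and the stabilizer of every point is the diagonal copy
of `kˣ` (the scalars). -/
theorem stmt7 (k : Type*) [Field k] (n : ℕ) [NeZero n] :
    (∀ t' t'' : Fin n → kˣ,
      (∃ a : Fin n → kˣ, ∀ i, (a (i - 1))⁻¹ * a i * t' i = t'' i) ↔
        ∏ i, t' i = ∏ i, t'' i) ∧
    (∀ a t' : Fin n → kˣ,
      (∀ i, (a (i - 1))⁻¹ * a i * t' i = t' i) ↔ ∃ c : kˣ, ∀ i, a i = c) := by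
  obtain ⟨m, rfl⟩ := Nat.exists_eq_add_one_of_ne_zero (NeZero.ne n)
  refine ⟨fun t' t'' => ?_, fun a t' => ?_⟩
  · calc (∃ a : Fin (m + 1) → kˣ, ∀ i, Fin.cyclicDiv a i * t' i = t'' i)
          ↔ ∃ a, Fin.cyclicDiv a = t'' / t' := by
            simp only [funext_iff, eq_div_iff_mul_eq', Pi.mul_apply]
      _ ↔ ∏ i, t'' i / t' i = 1 := Fin.exists_cyclicDiv_eq_iff
      _ ↔ ∏ i, t' i = ∏ i, t'' i := by rw [Finset.prod_div_distrib, div_eq_one, eq_comm]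
  · calc (∀ i, Fin.cyclicDiv a i * t' i = t' i) ↔ Fin.cyclicDiv a = 1 := by
          simp only [mul_eq_right, funext_iff, Pi.one_apply]
      _ ↔ ∃ c, ∀ i, a i = c := Fin.cyclicDiv_eq_one_iff
end

section
/- Let G be a group, H a subgroup, and suppose the functor cInd_H^G (compact induction) is exact, commutes with arbitrary direct sums, and is fully faithful on a full abelian subcategory B of Rep(H) closed under subquotients, kernels and cokernels. If the essential image of B under cInd_H^G contains a projective generator of a block C of Rep(G), then cInd_H^G: B → C is essentially surjective, hence an equivalence of categories. -/
open CategoryTheory CategoryTheory.Limits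

universe v u₁ u₂

/-- Let `F = cInd_H^G : B ⥤ C` be an exact functor between abelian
categories (the full abelian subcategory `B` of `Rep(H)` and a block `C` of
`Rep(G)`) which commutes with arbitrary direct sums and is fully faithful.  If the
essential image of `B` under `F` contains a projective generator of the block `C`,
then `F` is essentially surjective, hence an equivalence of categories. -/
theorem stmt13 {B : Type u₁} {C : Type u₂} [Category.{v} B] [Category.{v} C]
    [Abelian B] [Abelian C] [HasCoproducts.{v} B] [HasCoproducts.{v} C]
    (F : B ⥤ C) [F.Additive]
    [PreservesFiniteLimits F] [PreservesFiniteColimits F]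
    [∀ J : Type v, PreservesColimitsOfShape (Discrete J) F]
    [F.Full] [F.Faithful]
    (P : B) (hP : Projective (F.obj P))
    (hgen : ∀ X : C, ¬ IsZero X → ∃ f : F.obj P ⟶ X, f ≠ 0) :
    F.EssSurj ∧ F.IsEquivalence := by
  haveI := hP
  -- Step 1: for every object `X`, the canonical map from a coproduct of copies of
  -- `F.obj P` to `X` is an epimorphism.
  have epi_desc : ∀ X : C,
      Epi (Sigma.desc (fun f : F.obj P ⟶ X => f)) := by
    intro X
    set e : (∐ fun _ : F.obj P ⟶ X => F.obj P) ⟶ X :=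
      Sigma.desc (fun f : F.obj P ⟶ X => f) with he
    have hQ : IsZero (cokernel e) := by
      by_contra h
      obtain ⟨f, hf⟩ := hgen _ h
      apply hf
      have hfac : Projective.factorThru f (cokernel.π e) ≫ cokernel.π e = f :=
        Projective.factorThru_comp f (cokernel.π e)
      have hι : Projective.factorThru f (cokernel.π e)
          = Sigma.ι (fun _ : F.obj P ⟶ X => F.obj P)
              (Projective.factorThru f (cokernel.π e)) ≫ e := by
        simp [he]
      rw [← hfac, hι, Category.assoc, cokernel.condition, comp_zero]
    exact Abelian.epi_of_cokernel_π_eq_zero e (hQ.eq_zero_of_tgt _)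
  have essSurj : F.EssSurj := by
    constructor
    intro X
    set e : (∐ fun _ : F.obj P ⟶ X => F.obj P) ⟶ X :=
      Sigma.desc (fun f : F.obj P ⟶ X => f) with he
    haveI : Epi e := epi_desc X
    set K := kernel e with hK
    set e' : (∐ fun _ : F.obj P ⟶ K => F.obj P) ⟶ K :=
      Sigma.desc (fun f : F.obj P ⟶ K => f) with he'
    haveI : Epi e' := epi_desc K
    set g : (∐ fun _ : F.obj P ⟶ K => F.obj P) ⟶ (∐ fun _ : F.obj P ⟶ X => F.obj P) :=
      e' ≫ kernel.ι e with hg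
    -- `X ≅ cokernel (kernel.ι e)` since `e` is epi
    have iso₁ : cokernel (kernel.ι e) ≅ X := asIso (Abelian.factorThruCoimage e)
    have iso₂ : cokernel g ≅ cokernel (kernel.ι e) := cokernelEpiComp e' (kernel.ι e)
    -- comparison isomorphisms for coproducts
    set cA : (∐ fun _ : F.obj P ⟶ K => F.obj P) ⟶ F.obj (∐ fun _ : F.obj P ⟶ K => P) :=
      sigmaComparison F (fun _ : F.obj P ⟶ K => P) with hcA
    set cB : (∐ fun _ : F.obj P ⟶ X => F.obj P) ⟶ F.obj (∐ fun _ : F.obj P ⟶ X => P) :=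
      sigmaComparison F (fun _ : F.obj P ⟶ X => P) with hcB
    haveI : IsIso cA := by infer_instance
    haveI : IsIso cB := by infer_instance
    set m : (∐ fun _ : F.obj P ⟶ K => P) ⟶ (∐ fun _ : F.obj P ⟶ X => P) :=
      F.preimage (inv cA ≫ g ≫ cB) with hm
    have hFm : F.map m = inv cA ≫ g ≫ cB := F.map_preimage _
    have iso₃ : cokernel (F.map m) ≅ cokernel g :=
      (cokernel.mapIso g (F.map m) (asIso cA) (asIso cB) (by rw [hFm]; simp)).symm
    have iso₄ : F.obj (cokernel m) ≅ cokernel (F.map m) := PreservesCokernel.iso F m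
    exact ⟨cokernel m, ⟨iso₄ ≪≫ iso₃ ≪≫ iso₂ ≪≫ iso₁⟩⟩
  haveI := essSurj
  exact ⟨essSurj, ⟨inferInstance, inferInstance, inferInstance⟩⟩
end
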